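/- arXiv:2405.09351 — 2 statements merged into one kernel-verified Lean document; each statement's English description precedes it below -/
import Mathlib

section
/- Suppose $\nabla \Phi(x)^\top = Z(x) Y(x)$ for all $x$ in an open set $\mathcal{X} \subset \mathbb{R}^n$, where $Z : \mathcal{X} \to \mathbb{R}^{1 \times d}$ and $Y : \mathcal{X} \to \mathbb{R}^{d \times n}$ are continuously differentiable with $d < n$, and suppose $Z(x^*) = 0$ at some point $x^*$. Then $x^*$ is a critical point of $\Phi$ and the Hessian of $\Phi$ at $x^*$ equals the matrix with $i$-th row $\frac{\partial Z}{\partial x_i}(x^*) Y(x^*)$, which has rank at most $d < n$; hence $x^*$ is a degenerate critical point. -/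
/-!
Where `Z` vanishes, the product rule kills the term `Z(x*) ∂Y`, so the `i`-th row of the Hessian
is `∂ᵢZ(x*) Y(x*)`. The Hessian thus factors through `ℝᵈ` as `(∂ᵢZ(x*))ᵢ * Y(x*)`, an `n × d`
times `d × n` product, so its rank is at most `d < n` and it is singular.
-/

open Filter Topology

theorem HasFDerivAt.sum_mul_of_eq_zero {𝕜 E 𝔸 ι : Type*} [NontriviallyNormedField 𝕜]
    [NormedAddCommGroup E] [NormedSpace 𝕜 E] [NormedCommRing 𝔸] [NormedAlgebra 𝕜 𝔸]
    {s : Finset ι} {f g : ι → E → 𝔸} {f' : ι → E →L[𝕜] 𝔸} {x : E}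
    (hf : ∀ k ∈ s, HasFDerivAt (f k) (f' k) x) (hg : ∀ k ∈ s, DifferentiableAt 𝕜 (g k) x)
    (h0 : ∀ k ∈ s, f k x = 0) :
    HasFDerivAt (fun y => ∑ k ∈ s, f k y * g k y) (∑ k ∈ s, g k x • f' k) x := by
  refine HasFDerivAt.fun_sum fun k hk => ?_
  have hprod := (hf k hk).mul (hg k hk).hasFDerivAt
  rwa [h0 k hk, zero_smul 𝔸 (fderiv 𝕜 (g k) x), zero_add] at hprod

theorem Matrix.det_eq_zero_of_rank_lt {m R : Type*} [Fintype m] [DecidableEq m] [CommRing R]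
    [IsDomain R] {A : Matrix m m R} (h : A.rank < Fintype.card m) : A.det = 0 := by
  by_contra hdet
  exact h.ne (rank_of_det_ne_zero hdet)

theorem bottleneck_degenerate_critical_point_general (n d : ℕ) (hdn : d < n)
    (X : Set (Fin n → ℝ)) (hX : IsOpen X)
    (Φ : (Fin n → ℝ) → ℝ)
    (Z : (Fin n → ℝ) → Fin d → ℝ) (Y : (Fin n → ℝ) → Fin d → Fin n → ℝ)
    (hZ : ContDiffOn ℝ 1 Z X) (hY : ContDiffOn ℝ 1 Y X)
    (hgrad : ∀ x ∈ X, ∀ v : Fin n → ℝ,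
      fderiv ℝ Φ x v = ∑ k, Z x k * ∑ i, Y x k i * v i)
    (x₀ : Fin n → ℝ) (hx₀ : x₀ ∈ X) (hZ0 : Z x₀ = 0) :
    fderiv ℝ Φ x₀ = 0 ∧
      (∀ i j, fderiv ℝ (fun x => fderiv ℝ Φ x (Pi.single j 1)) x₀ (Pi.single i 1)
        = ∑ k, fderiv ℝ (fun x => Z x k) x₀ (Pi.single i 1) * Y x₀ k j) ∧
      (Matrix.of fun i j : Fin n =>
        fderiv ℝ (fun x => fderiv ℝ Φ x (Pi.single j 1)) x₀
          (Pi.single i 1)).rank ≤ d ∧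
      (Matrix.of fun i j : Fin n =>
        fderiv ℝ (fun x => fderiv ℝ Φ x (Pi.single j 1)) x₀
          (Pi.single i 1)).det = 0 := by
  have hXn : X ∈ 𝓝 x₀ := hX.mem_nhds hx₀
  have hZd : DifferentiableAt ℝ Z x₀ := (hZ.contDiffAt hXn).differentiableAt one_ne_zero
  have hYd : DifferentiableAt ℝ Y x₀ := (hY.contDiffAt hXn).differentiableAt one_ne_zero
  have hpartial : ∀ j, (fun x => fderiv ℝ Φ x (Pi.single j 1))
      =ᶠ[𝓝 x₀] fun x => ∑ k, Z x k * Y x k j := fun j => by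
    filter_upwards [hXn] with x hx
    simp [hgrad x hx, Pi.single_apply]
  have hhess : ∀ i j, fderiv ℝ (fun x => fderiv ℝ Φ x (Pi.single j 1)) x₀ (Pi.single i 1)
      = ∑ k, fderiv ℝ (fun x => Z x k) x₀ (Pi.single i 1) * Y x₀ k j := fun i j => by
    rw [(hpartial j).fderiv_eq, (HasFDerivAt.sum_mul_of_eq_zero
      (fun k _ => (differentiableAt_pi.mp hZd k).hasFDerivAt)
      (fun k _ => differentiableAt_pi.mp (differentiableAt_pi.mp hYd k) j)
      (fun k _ => congrFun hZ0 k)).fderiv]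
    simp [mul_comm]
  set H := Matrix.of fun i j : Fin n =>
    fderiv ℝ (fun x => fderiv ℝ Φ x (Pi.single j 1)) x₀ (Pi.single i 1)
  have hfactor : H = Matrix.of (fun i k => fderiv ℝ (fun x => Z x k) x₀ (Pi.single i 1))
      * Matrix.of (Y x₀) := by
    ext i j
    simp [H, Matrix.mul_apply, hhess i j]
  have hrank : H.rank ≤ d :=
    hfactor ▸ (Matrix.rank_mul_le_right _ _).trans (Matrix.rank_le_height _)
  refine ⟨?_, hhess, hrank, Matrix.det_eq_zero_of_rank_lt (by simpa using hrank.trans_lt hdn)⟩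
  ext v
  simp [hgrad x₀ hx₀ v, hZ0]

/-- Bottleneck degeneracy: if `∇Φ(x)ᵀ = Z(x) Y(x)` with `Z : X → ℝ^{1×d}`,
`Y : X → ℝ^{d×n}`, `d < n`, and `Z(x⁎) = 0`, then `x⁎` is a critical point of
`Φ`, the Hessian at `x⁎` has `i`-th row `(∂Z/∂xᵢ)(x⁎) Y(x⁎)`, its rank is at
most `d < n`, and hence `x⁎` is a degenerate critical point. -/
theorem bottleneck_degenerate_critical_point (n d : ℕ) (hdn : d < n)
    (X : Set (Fin n → ℝ)) (hX : IsOpen X)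
    (Φ : (Fin n → ℝ) → ℝ)
    (Z : (Fin n → ℝ) → Fin d → ℝ) (Y : (Fin n → ℝ) → Fin d → Fin n → ℝ)
    (hZ : ContDiffOn ℝ 1 Z X) (hY : ContDiffOn ℝ 1 Y X)
    (hΦ : ContDiffOn ℝ 2 Φ X)
    (hgrad : ∀ x ∈ X, ∀ v : Fin n → ℝ,
      fderiv ℝ Φ x v = ∑ k, Z x k * ∑ i, Y x k i * v i)
    (x₀ : Fin n → ℝ) (hx₀ : x₀ ∈ X) (hZ0 : Z x₀ = 0) :
    fderiv ℝ Φ x₀ = 0 ∧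
      (∀ i j, fderiv ℝ (fun x => fderiv ℝ Φ x (Pi.single j 1)) x₀ (Pi.single i 1)
        = ∑ k, fderiv ℝ (fun x => Z x k) x₀ (Pi.single i 1) * Y x₀ k j) ∧
      (Matrix.of fun i j : Fin n =>
        fderiv ℝ (fun x => fderiv ℝ Φ x (Pi.single j 1)) x₀
          (Pi.single i 1)).rank ≤ d ∧
      (Matrix.of fun i j : Fin n =>
        fderiv ℝ (fun x => fderiv ℝ Φ x (Pi.single j 1)) x₀
          (Pi.single i 1)).det = 0 :=
  bottleneck_degenerate_critical_point_general n d hdn X hX Φ Z Y hZ hY hgrad x₀ hx₀ hZ0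
end

section
/- Fix $T > 0$, $n < m$, and an open set $\mathcal{X} \subset \mathbb{R}^n$. For every $\Psi \in C^1(\mathcal{X}, \mathbb{R})$, there exist a matrix $W \in \mathbb{R}^{m \times n}$ of rank $n$, a row vector $\widetilde{W} \in \mathbb{R}^{1 \times m}$ of rank 1, $b \in \mathbb{R}^m$, $\tilde{b} \in \mathbb{R}$, and a vector field $f \in C^{0,1}(\mathbb{R} \times \mathbb{R}^m, \mathbb{R}^m)$ such that the solutions of $h' = f(t, h)$, $h(0) = Wx + b$ exist on $[0,T]$ for all $x \in \mathcal{X}$ and $\widetilde{W} h_{Wx+b}(T) + \tilde{b} = \Psi(x)$ for all $x \in \mathcal{X}$. -/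
/-!
Embed `ℝⁿ` into `ℝᵐ` by zero padding `ι` and reserve one further coordinate, with
unit vector `e`, for the output. Writing `π` for the projection onto the first `n`
coordinates, the autonomous field `h ↦ (Ψ (π h) / T) • e` never changes `π h`, so it is
constant along each trajectory, which is therefore the straight line
`t ↦ ι x + (t Ψ(x) / T) • e`; at time `T` its output coordinate is `Ψ(x)`.
-/

open Function

namespace LinearMap

variable {K : Type*} [Field K] {m n : Type*} [Fintype n] [DecidableEq n]

theorem rank_toMatrix'_of_injective {f : (n → K) →ₗ[K] m → K} (hf : Injective f) :
    (toMatrix' f).rank = Fintype.card n := by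
  rw [Matrix.rank, ← Matrix.toLin'_apply', Matrix.toLin'_toMatrix', finrank_range_of_inj hf,
    Module.finrank_fintype_fun_eq_card]

theorem rank_toMatrix'_of_surjective [Fintype m] {f : (n → K) →ₗ[K] m → K} (hf : Surjective f) :
    (toMatrix' f).rank = Fintype.card m := by
  rw [Matrix.rank, ← Matrix.toLin'_apply', Matrix.toLin'_toMatrix', range_eq_top.2 hf,
    finrank_top, Module.finrank_fintype_fun_eq_card]

variable {R ι η : Type*} [Semiring R] {s : ι → η}

theorem funLeft_extendByZero (hs : Injective s) (x : ι → R) :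
    funLeft R R s (ExtendByZero.linearMap R s x) = x :=
  funext fun i => hs.extend_apply x 0 i

theorem funLeft_single_of_notMem_range [DecidableEq η] {k : η} (hk : k ∉ Set.range s) (r : R) :
    funLeft R R s (Pi.single k r) = 0 :=
  funext fun i => Pi.single_eq_of_ne (M := fun _ => R) (fun h => hk ⟨i, h⟩) r

theorem extendByZero_apply_of_notMem_range {k : η} (hk : k ∉ Set.range s) (x : ι → R) :
    ExtendByZero.linearMap R s x k = 0 :=
  extend_apply' x (0 : η → R) k hk

end LinearMap

noncomputable section AugmentedFlow

variable {E F : Type*} [AddCommGroup F] [Module ℝ F]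

def augmentedField (π : F → E) (Ψ : E → ℝ) (T : ℝ) (e h : F) : F :=
  (Ψ (π h) / T) • e

def augmentedFlow (ι : E → F) (Ψ : E → ℝ) (T : ℝ) (e : F) (x : E) (t : ℝ) : F :=
  ι x + (t * (Ψ x / T)) • e

variable {ι : E → F} {Ψ : E → ℝ} {T : ℝ} {e : F}

theorem augmentedFlow_zero (x : E) : augmentedFlow ι Ψ T e x 0 = ι x := by
  simp [augmentedFlow]

theorem map_augmentedFlow_of_leftInverse [AddCommGroup E] [Module ℝ E] {π : F →ₗ[ℝ] E}
    (hπι : ∀ x, π (ι x) = x) (hπe : π e = 0) (x : E) (t : ℝ) :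
    π (augmentedFlow ι Ψ T e x t) = x := by
  simp [augmentedFlow, hπι, hπe]

theorem map_augmentedFlow_self {ℓ : F →ₗ[ℝ] ℝ} (hℓι : ∀ x, ℓ (ι x) = 0) (hℓe : ℓ e = 1)
    (hT : T ≠ 0) (x : E) : ℓ (augmentedFlow ι Ψ T e x T) = Ψ x := by
  simp [augmentedFlow, hℓι, hℓe, mul_div_cancel₀ _ hT]

end AugmentedFlow

section AugmentedFlowCalculus

variable {E F : Type*} [NormedAddCommGroup F] [NormedSpace ℝ F] {Ψ : E → ℝ} {T : ℝ} {e : F}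

theorem hasDerivAt_augmentedFlow [AddCommGroup E] [Module ℝ E] {ι : E → F} {π : F →ₗ[ℝ] E}
    (hπι : ∀ x, π (ι x) = x) (hπe : π e = 0) (x : E) (t : ℝ) :
    HasDerivAt (augmentedFlow ι Ψ T e x)
      (augmentedField π Ψ T e (augmentedFlow ι Ψ T e x t)) t := by
  rw [augmentedField, map_augmentedFlow_of_leftInverse hπι hπe]
  unfold augmentedFlow
  simpa using ((hasDerivAt_mul_const (Ψ x / T)).smul_const e).const_add (ι x)

theorem contDiffOn_augmentedField [NormedAddCommGroup E] [NormedSpace ℝ E] {π : F → E}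
    {k : WithTop ℕ∞} (hπ : ContDiff ℝ k π) {X : Set E} (hΨ : ContDiffOn ℝ k Ψ X) :
    ContDiffOn ℝ k (augmentedField π Ψ T e) (π ⁻¹' X) :=
  ((hΨ.comp hπ.contDiffOn (Set.mapsTo_preimage π X)).div_const T).smul contDiffOn_const

end AugmentedFlowCalculus

theorem Fin.castLE_notMem_range {n m : ℕ} (h : n < m) : ⟨n, h⟩ ∉ Set.range (Fin.castLE h.le) :=
  fun ⟨j, hj⟩ => (Fin.ext_iff.1 hj ▸ j.isLt).false

open LinearMap in
/-- Universal embedding of augmented neural ODEs: every `C¹` map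
`Ψ : X → ℝ`, `X ⊆ ℝⁿ` open, can be exactly represented as
`x ↦ W̃ h_{Wx+b}(T) + b̃` for full-rank affine layers and a vector field `f`
which is continuous in time and `C¹` in the state on an open set containing the
relevant trajectories. -/
theorem universal_embedding_augmented_node (n m : ℕ) (hnm : n < m)
    (T : ℝ) (hT : 0 < T)
    (X : Set (Fin n → ℝ)) (hX : IsOpen X)
    (Ψ : (Fin n → ℝ) → ℝ) (hΨ : ContDiffOn ℝ 1 Ψ X) :
    ∃ (W : Matrix (Fin m) (Fin n) ℝ) (Wt : Matrix (Fin 1) (Fin m) ℝ)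
      (b : Fin m → ℝ) (bt : ℝ)
      (f : ℝ → (Fin m → ℝ) → (Fin m → ℝ))
      (Ω : Set (Fin m → ℝ))
      (H : (Fin n → ℝ) → ℝ → (Fin m → ℝ)),
      W.rank = n ∧ Wt.rank = 1 ∧ IsOpen Ω ∧
      ContinuousOn (fun pr : ℝ × (Fin m → ℝ) => f pr.1 pr.2)
        ((Set.univ : Set ℝ) ×ˢ Ω) ∧
      (∀ t : ℝ, ContDiffOn ℝ 1 (f t) Ω) ∧
      (∀ x ∈ X, H x 0 = W.mulVec x + b) ∧
      (∀ x ∈ X, ∀ t ∈ Set.Icc (0 : ℝ) T,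
        H x t ∈ Ω ∧ HasDerivAt (H x) (f t (H x t)) t) ∧
      (∀ x ∈ X, Wt.mulVec (H x T) 0 + bt = Ψ x) := by
  set k : Fin m := ⟨n, hnm⟩
  set ι := ExtendByZero.linearMap ℝ (Fin.castLE hnm.le)
  set π := funLeft ℝ ℝ (Fin.castLE hnm.le)
  set ℓ : (Fin m → ℝ) →ₗ[ℝ] Fin 1 → ℝ := pi fun _ => proj k
  set e : Fin m → ℝ := Pi.single k 1
  have hπι : ∀ x, π (ι x) = x := funLeft_extendByZero (Fin.castLE_injective _)
  have hπe : π e = 0 := funLeft_single_of_notMem_range (Fin.castLE_notMem_range hnm) 1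
  have hπ : ContDiff ℝ 1 π := contDiff_pi.2 fun j => contDiff_apply ℝ ℝ _
  have hℓ : Surjective ℓ := fun y =>
    ⟨Pi.single k (y 0), funext fun i => by simp [ℓ, Subsingleton.elim i 0]⟩
  have hfield := contDiffOn_augmentedField (T := T) (e := e) hπ hΨ
  refine ⟨toMatrix' ι, toMatrix' ℓ, 0, 0, fun _ => augmentedField π Ψ T e, π ⁻¹' X,
    augmentedFlow ι Ψ T e, ?_, ?_, hX.preimage hπ.continuous,
    hfield.continuousOn.comp continuousOn_snd fun p hp => hp.2, fun _ => hfield,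
    fun x _ => by simp [augmentedFlow_zero], fun x hx t _ => ⟨?_, ?_⟩, fun x _ => ?_⟩
  · simpa using rank_toMatrix'_of_injective (LeftInverse.injective hπι)
  · simpa using rank_toMatrix'_of_surjective hℓ
  · rwa [Set.mem_preimage, map_augmentedFlow_of_leftInverse hπι hπe]
  · exact hasDerivAt_augmentedFlow hπι hπe x t
  · rw [toMatrix'_mulVec, add_zero]
    exact map_augmentedFlow_self (ι := ι) (ℓ := proj k)
      (extendByZero_apply_of_notMem_range (Fin.castLE_notMem_range hnm))
      (Pi.single_eq_same k 1) hT.ne' x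
end
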